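/- arXiv:1508.01285 — 6 statements merged into one kernel-verified Lean document; each statement's English description precedes it below -/
import Mathlib

section
/- For all real numbers x with |x| ≤ √2/2 and all u with 0 < u ≤ 1, the polynomial P(u,x) = 1 + 5u² + 3ux − 3u³x + 3x² − 11u²x² − 12ux³ + 2u³x³ + 12u²x⁴ is strictly positive. -/
/-!
Write `P u x` for the polynomial. The sum `P u x + P u (-x)` is twice its part that is even in `x`,
`1 + 3x² + u²(5 - 11x² + 12x⁴)`, which is positive everywhere because `5 - 11t + 12t²` has negative
discriminant. The product `P u x * P u (-x)` is a polynomial in `v = u²` and `t = x²`, and it is positive on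
the rectangle `0 ≤ v ≤ 1`, `0 ≤ t ≤ 1/2`. Two reals with positive sum and positive product are both positive.
-/

def secondDerivNumerator (u x : ℝ) : ℝ :=
  1 + 5*u^2 + 3*u*x - 3*u^3*x + 3*x^2 - 11*u^2*x^2 - 12*u*x^3 + 2*u^3*x^3 + 12*u^2*x^4

def secondDerivNumeratorNorm (v t : ℝ) : ℝ :=
  1 + 6*t + 9*t^2 + v*(10 - t + 30*t^2 - 72*t^3)
    + v^2*(25 - 92*t + 157*t^2 - 216*t^3 + 144*t^4) - v^3*t*(3 - 2*t)^2

lemma secondDerivNumerator_mul_neg (u x : ℝ) :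
    secondDerivNumerator u x * secondDerivNumerator u (-x) =
      secondDerivNumeratorNorm (u^2) (x^2) := by
  unfold secondDerivNumerator secondDerivNumeratorNorm
  ring

lemma secondDerivNumerator_add_neg_pos (u x : ℝ) :
    0 < secondDerivNumerator u x + secondDerivNumerator u (-x) := by
  have h : 0 < 5 - 11*x^2 + 12*x^4 := by nlinarith [sq_nonneg (x^2 - 11/24)]
  have : secondDerivNumerator u x + secondDerivNumerator u (-x) =
      2 * (1 + 3*x^2 + u^2 * (5 - 11*x^2 + 12*x^4)) := by
    unfold secondDerivNumerator; ring
  rw [this]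
  positivity

lemma secondDerivNumeratorNorm_pos {v t : ℝ} (hv0 : 0 ≤ v) (hv1 : v ≤ 1) (ht0 : 0 ≤ t)
    (ht : t ≤ 1/2) : 0 < secondDerivNumeratorNorm v t := by
  unfold secondDerivNumeratorNorm
  have hcubic : v^3*t*(3 - 2*t)^2 ≤ v^2*t*(3 - 2*t)^2 := by
    have : 0 ≤ v^2*t*(3 - 2*t)^2 := by positivity
    nlinarith
  nlinarith [mul_nonneg hv0 ht0, mul_nonneg (mul_nonneg hv0 hv0) ht0, mul_nonneg hv0 (sub_nonneg.2 ht),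
    mul_nonneg (mul_nonneg hv0 ht0) (sub_nonneg.2 ht),
    mul_nonneg (mul_nonneg hv0 hv0) (mul_nonneg ht0 (sub_nonneg.2 ht)),
    mul_nonneg (sub_nonneg.2 hv1) ht0, mul_nonneg hv0 (sub_nonneg.2 hv1)]

lemma pos_of_add_pos_of_mul_pos {α : Type*} [Ring α] [LinearOrder α] [IsStrictOrderedRing α]
    {a b : α} (hsum : 0 < a + b) (hprod : 0 < a * b) : 0 < a := by
  rcases pos_and_pos_or_neg_and_neg_of_mul_pos hprod with ⟨ha, -⟩ | ⟨ha, hb⟩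
  · exact ha
  · exact absurd hsum (add_neg ha hb).not_gt

lemma sq_le_half_of_abs_le_sqrt_two_div_two {x : ℝ} (hx : |x| ≤ √2 / 2) : x^2 ≤ 1/2 := by
  have h := sq_le_sq' (neg_le_of_abs_le hx) (le_of_abs_le hx)
  rw [div_pow, Real.sq_sqrt zero_le_two] at h
  linarith

theorem stmt_1 (u x : ℝ) (hx : |x| ≤ Real.sqrt 2 / 2) (hu0 : 0 < u) (hu1 : u ≤ 1) :
    0 < 1 + 5*u^2 + 3*u*x - 3*u^3*x + 3*x^2 - 11*u^2*x^2 - 12*u*x^3 + 2*u^3*x^3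
        + 12*u^2*x^4 := by
  have hu2 : u^2 ≤ 1 := pow_le_one₀ hu0.le hu1
  have hprod : 0 < secondDerivNumerator u x * secondDerivNumerator u (-x) := by
    rw [secondDerivNumerator_mul_neg]
    exact secondDerivNumeratorNorm_pos (sq_nonneg u) hu2 (sq_nonneg x)
      (sq_le_half_of_abs_le_sqrt_two_div_two hx)
  exact pos_of_add_pos_of_mul_pos (secondDerivNumerator_add_neg_pos u x) hprod
end

section
/- Let y ∈ (0, 1/2] and define f(x,y) = −(1+4y)x⁴ + (1+4y)x² − y. Then for all x ∈ [√2/2, 1 − y/2], f(x,y) ≥ f(1 − y/2, y) = (y²/16)(44 − 72y + 31y² − 4y³) > 0. -/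
/-! Writing `t = x²`, the function is the downward parabola `-(1+4y)t² + (1+4y)t - y`, whose
vertex is at `t = 1/2`; hence it decreases in `x` once `x ≥ √2/2`, and the minimum over the
interval is attained at its right end `1 - y/2`. -/

open Real Set

theorem antitoneOn_neg_quartic {c : ℝ} (hc : 0 ≤ c) (d : ℝ) :
    AntitoneOn (fun x : ℝ => -c * x ^ 4 + c * x ^ 2 - d) (Ici (√2 / 2)) := by
  intro a ha b hb hab
  have h_sq : (√2 / 2) ^ 2 = 1 / 2 := by
    rw [div_pow, sq_sqrt zero_le_two]; norm_num
  have ha2 : 1 / 2 ≤ a ^ 2 := h_sq ▸ pow_le_pow_left₀ (by positivity) ha 2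
  have hb2 : 1 / 2 ≤ b ^ 2 := h_sq ▸ pow_le_pow_left₀ (by positivity) hb 2
  have hab2 : a ^ 2 ≤ b ^ 2 := pow_le_pow_left₀ (by linarith [sqrt_nonneg 2, mem_Ici.1 ha]) hab 2
  have key : (-c * a ^ 4 + c * a ^ 2 - d) - (-c * b ^ 4 + c * b ^ 2 - d)
      = c * ((b ^ 2 - a ^ 2) * (a ^ 2 + b ^ 2 - 1)) := by ring
  have : 0 ≤ c * ((b ^ 2 - a ^ 2) * (a ^ 2 + b ^ 2 - 1)) :=
    mul_nonneg hc (mul_nonneg (by linarith) (by linarith))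
  dsimp only
  linarith

theorem cubic_pos_of_pos_of_le_half {y : ℝ} (hy0 : 0 < y) (hy1 : y ≤ 1 / 2) :
    0 < 44 - 72 * y + 31 * y ^ 2 - 4 * y ^ 3 := by
  have : 0 ≤ y ^ 2 * (31 - 4 * y) := mul_nonneg (sq_nonneg y) (by linarith)
  nlinarith

theorem stmt_5 (y : ℝ) (hy0 : 0 < y) (hy1 : y ≤ 1/2)
    (f : ℝ → ℝ → ℝ) (hf : ∀ x y, f x y = -(1 + 4*y)*x^4 + (1 + 4*y)*x^2 - y) :
    (∀ x ∈ Set.Icc (Real.sqrt 2 / 2) (1 - y/2), f x y ≥ f (1 - y/2) y) ∧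
    f (1 - y/2) y = (y^2/16) * (44 - 72*y + 31*y^2 - 4*y^3) ∧
    0 < f (1 - y/2) y := by
  have h_end : f (1 - y/2) y = (y^2/16) * (44 - 72*y + 31*y^2 - 4*y^3) := by rw [hf]; ring
  refine ⟨?_, h_end, ?_⟩
  · rintro x ⟨hx_left, hx_right⟩
    simp only [hf]
    exact antitoneOn_neg_quartic (by linarith) y hx_left (hx_left.trans hx_right) hx_right
  · rw [h_end]
    exact mul_pos (by positivity) (cubic_pos_of_pos_of_le_half hy0 hy1)
end

section
/- Let y ∈ (0,1/2], x ∈ [√2/2, 1 − y/2], and 0 < u ≤ √y/√(1 − x²). Then x + (1 − 2x²)·u > 0. -/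
/-!
Squaring the bound on `u` gives `u² (1 - x²) ≤ y ≤ 2 (1 - x)`. Only the case `2x² > 1` is
nontrivial, and there it suffices that `(2x² - 1)² u² < x²`, which after multiplying by
`1 - x² > 0` follows from `2 (2x² - 1)² (1 - x) < x² (1 - x²)`; the difference of the two
sides is `(1 - x)² (8x³ + 7x² - 2x - 2)`.
-/

lemma pos_and_sq_mul_le_of_le_sqrt_div {a b u : ℝ} (hu : 0 < u) (h : u ≤ √a / √b) :
    0 < b ∧ u ^ 2 * b ≤ a := by
  have hquot : 0 < √a / √b := hu.trans_le h
  have hsb : 0 < √b := by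
    rcases (Real.sqrt_nonneg b).lt_or_eq with hpos | hzero
    · exact hpos
    · rw [← hzero, div_zero] at hquot
      exact absurd hquot (lt_irrefl 0)
  have ha : 0 ≤ a := Real.sqrt_pos.1 ((div_pos_iff_of_pos_right hsb).1 hquot) |>.le
  have hb : 0 < b := Real.sqrt_pos.1 hsb
  refine ⟨hb, ?_⟩
  have hmul : u * √b ≤ √a := (le_div_iff₀ hsb).1 h
  calc u ^ 2 * b = (u * √b) ^ 2 := by rw [mul_pow, Real.sq_sqrt hb.le]
    _ ≤ √a ^ 2 := pow_le_pow_left₀ (by positivity) hmul 2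
    _ = a := Real.sq_sqrt ha

lemma two_mul_sq_mul_one_sub_lt {x : ℝ} (hx0 : 0 < x) (hx1 : x < 1) (hx : 1 < 2 * x ^ 2) :
    2 * (2 * x ^ 2 - 1) ^ 2 * (1 - x) < x ^ 2 * (1 - x ^ 2) := by
  have hcubic : 0 < 8 * x ^ 3 + 7 * x ^ 2 - 2 * x - 2 := by nlinarith
  have hfactor : x ^ 2 * (1 - x ^ 2) - 2 * (2 * x ^ 2 - 1) ^ 2 * (1 - x)
      = (1 - x) ^ 2 * (8 * x ^ 3 + 7 * x ^ 2 - 2 * x - 2) := by ring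
  linarith [mul_pos (pow_pos (sub_pos.2 hx1) 2) hcubic]

theorem stmt_6_general (y x u : ℝ)
    (hx : x ∈ Set.Icc (Real.sqrt 2 / 2) (1 - y/2))
    (hu0 : 0 < u) (hu1 : u ≤ Real.sqrt y / Real.sqrt (1 - x^2)) :
    0 < x + (1 - 2*x^2) * u := by
  obtain ⟨hx_lo, hx_hi⟩ := hx
  have hx0 : 0 < x := lt_of_lt_of_le (by positivity) hx_lo
  obtain ⟨hx_sq, hu_sq⟩ := pos_and_sq_mul_le_of_le_sqrt_div hu0 hu1
  have hx1 : x < 1 := by nlinarith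
  rcases le_or_gt (2 * x ^ 2) 1 with hsmall | hlarge
  · nlinarith
  have hpoly := two_mul_sq_mul_one_sub_lt hx0 hx1 hlarge
  have hsq : ((2 * x ^ 2 - 1) * u) ^ 2 < x ^ 2 := by
    refine lt_of_mul_lt_mul_right ?_ hx_sq.le
    calc ((2 * x ^ 2 - 1) * u) ^ 2 * (1 - x ^ 2)
        = (2 * x ^ 2 - 1) ^ 2 * (u ^ 2 * (1 - x ^ 2)) := by ring
      _ ≤ (2 * x ^ 2 - 1) ^ 2 * (2 * (1 - x)) :=
        mul_le_mul_of_nonneg_left (by linarith) (sq_nonneg _)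
      _ < x ^ 2 * (1 - x ^ 2) := by linarith
  nlinarith [abs_lt_of_sq_lt_sq' hsq hx0.le]

theorem stmt_6 (y x u : ℝ) (hy0 : 0 < y) (hy1 : y ≤ 1/2)
    (hx : x ∈ Set.Icc (Real.sqrt 2 / 2) (1 - y/2))
    (hu0 : 0 < u) (hu1 : u ≤ Real.sqrt y / Real.sqrt (1 - x^2)) :
    0 < x + (1 - 2*x^2) * u :=
  stmt_6_general y x u hx hu0 hu1
end

section
/- For u ∈ [−2,2], the function g(y) = (1/(2√2·π·y))·(√2 − √(√(y² + uy + 1) − y + 1)) defined for y > 0 is nonincreasing on (0,∞) if and only if u ∈ [−6/5, 2]. -/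
/-!
Put `S = √(y² + u y + 1)`, `T = √(S - y + 1)` and `a = u + 2`. From `T² = S - y + 1` and
`S² = y² + u y + 1` one gets `(2 - T²) T² = (2 T² - a) y`, so the density equals
`φ(T) = (2 T² - a) / (2 √2 π T² (√2 + T))`. Since `y ↦ T` is antitone and, as `y` runs over
`(0, 1)`, sweeps a left neighbourhood of `√2 = T(0)`, the density is antitone iff `φ` is monotone
on the range of `T`. For `t < s`, `φ s - φ t` has the sign of
`a (√2 (s + t) + s² + s t + t²) - 2 s² t²`, which equals `10 a - 8` at `s = t = √2` and is
nonnegative on `(0, √2]²` as soon as `a ≥ 4/5`.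
-/

open Set Real Filter Topology

theorem antitoneOn_iff_monotoneOn_image {α β γ : Type*} [LinearOrder α] [PartialOrder β]
    [Preorder γ] {f : α → γ} {F : β → γ} {T : α → β} {s : Set α}
    (hT : AntitoneOn T s) (hf : EqOn f (F ∘ T) s) :
    AntitoneOn f s ↔ MonotoneOn F (T '' s) := by
  constructor
  · rintro hf' _ ⟨x, hx, rfl⟩ _ ⟨y, hy, rfl⟩ hxy
    rcases le_total x y with h | h
    · rw [le_antisymm hxy (hT hx hy h)]
    · simpa only [hf hx, hf hy, Function.comp_apply] using hf' hy hx h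
  · intro hF x hx y hy hxy
    simpa only [hf hx, hf hy, Function.comp_apply] using
      hF (mem_image_of_mem T hy) (mem_image_of_mem T hx) (hT hx hy hxy)

theorem antitone_sqrt_sq_add_sub {c : ℝ} (hc : 0 ≤ c) :
    Antitone fun x : ℝ => √(x ^ 2 + c) - x := by
  intro x y hxy
  have hx : x ≤ √(x ^ 2 + c) := Real.le_sqrt_of_sq_le (by linarith)
  suffices √(y ^ 2 + c) ≤ √(x ^ 2 + c) + (y - x) by simp only; linarith
  rw [Real.sqrt_le_left (by linarith [Real.sqrt_nonneg (x ^ 2 + c)])]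
  nlinarith [Real.sq_sqrt (show 0 ≤ x ^ 2 + c by positivity)]

theorem five_mul_sq_mul_sq_le {s t : ℝ} (hs : s ∈ Icc 0 √2) (ht : t ∈ Icc 0 √2) :
    5 * s ^ 2 * t ^ 2 ≤ 2 * (√2 * (s + t) + s ^ 2 + s * t + t ^ 2) := by
  obtain ⟨hs0, hs2⟩ := hs
  obtain ⟨ht0, ht2⟩ := ht
  have hr : √2 ^ 2 = 2 := Real.sq_sqrt (by norm_num)
  rcases le_total (5 * t ^ 2) 2 with h | h
  · nlinarith [mul_nonneg (sub_nonneg.2 h) (sq_nonneg s), mul_nonneg hs0 ht0]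
  · -- concave in `s`, so it lies above its chord between `s = 0` and `s = √2`
    have key : √2 * (2 * (√2 * (s + t) + s ^ 2 + s * t + t ^ 2) - 5 * s ^ 2 * t ^ 2) =
        4 * s * (√2 - t) * (√2 + 2 * t) + 2 * t * (√2 - s) * (√2 + t)
          + √2 * (5 * t ^ 2 - 2) * s * (√2 - s) := by
      linear_combination (-5 * s * t ^ 2) * hr
    have : 0 ≤ √2 * (2 * (√2 * (s + t) + s ^ 2 + s * t + t ^ 2) - 5 * s ^ 2 * t ^ 2) := by
      have hs2' : 0 ≤ √2 - s := sub_nonneg.2 hs2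
      have ht2' : 0 ≤ √2 - t := sub_nonneg.2 ht2
      have h' : 0 ≤ 5 * t ^ 2 - 2 := by linarith
      rw [key]
      positivity
    nlinarith

noncomputable def levyProfile (a t : ℝ) : ℝ :=
  (2 * t ^ 2 - a) / (2 * √2 * π * (t ^ 2 * (√2 + t)))

theorem levyProfile_le_levyProfile_iff {a s t : ℝ} (ht : 0 < t) (hts : t < s) :
    levyProfile a t ≤ levyProfile a s ↔
      2 * s ^ 2 * t ^ 2 ≤ a * (√2 * (s + t) + s ^ 2 + s * t + t ^ 2) := by
  have hs : 0 < s := ht.trans hts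
  have hpos : 0 < (s - t) / (2 * √2 * π * (t ^ 2 * (√2 + t)) * (s ^ 2 * (√2 + s))) := by
    have := sub_pos.2 hts
    positivity
  have hsub : levyProfile a s - levyProfile a t =
      (a * (√2 * (s + t) + s ^ 2 + s * t + t ^ 2) - 2 * s ^ 2 * t ^ 2) *
        ((s - t) / (2 * √2 * π * (t ^ 2 * (√2 + t)) * (s ^ 2 * (√2 + s)))) := by
    unfold levyProfile
    field_simp
    ring
  rw [← sub_nonneg, hsub, mul_nonneg_iff_of_pos_right hpos, sub_nonneg]

theorem monotoneOn_levyProfile {a : ℝ} (ha : 4 / 5 ≤ a) :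
    MonotoneOn (levyProfile a) (Ioc 0 √2) := by
  intro t ht s hs hts
  rcases hts.eq_or_lt with rfl | hts
  · rfl
  rw [levyProfile_le_levyProfile_iff ht.1 hts]
  have hM : 0 ≤ √2 * (s + t) + s ^ 2 + s * t + t ^ 2 := by
    have ht0 := ht.1
    have hs0 := hs.1
    positivity
  nlinarith [five_mul_sq_mul_sq_le (Ioc_subset_Icc_self hs) (Ioc_subset_Icc_self ht)]

theorem not_monotoneOn_levyProfile {a b : ℝ} (ha : a < 4 / 5) (hb : b < √2) :
    ¬ MonotoneOn (levyProfile a) (Ioo b √2) := by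
  have hr : √2 ^ 2 = 2 := Real.sq_sqrt (by norm_num)
  have hr4 : √2 ^ 4 = 4 := by rw [show 4 = 2 * 2 by rfl, pow_mul, hr]; norm_num
  have hnear : ∀ᶠ t in 𝓝[<] √2, t ∈ Ioo (max b 0) √2 ∧ 5 * a < t ^ 4 :=
    Filter.Eventually.and (Ioo_mem_nhdsLT (max_lt hb (by positivity))) <| nhdsWithin_le_nhds <|
      (continuous_pow 4).continuousAt.eventually (lt_mem_nhds (by simp only [hr4]; linarith))
  obtain ⟨t, ⟨hbt, htr⟩, hat⟩ := hnear.exists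
  obtain ⟨hbt, ht0⟩ := max_lt_iff.1 hbt
  set s := (t + √2) / 2 with hs
  have hts : t < s := by rw [hs]; linarith
  have hsr : s < √2 := by rw [hs]; linarith
  intro hmono
  have hle := (levyProfile_le_levyProfile_iff ht0 hts).1
    (hmono ⟨hbt, htr⟩ ⟨hbt.trans hts, hsr⟩ hts.le)
  -- the right-hand side is at most `10 a < 2 t⁴`, the left-hand side exceeds `2 t⁴`
  have hM : √2 * (s + t) + s ^ 2 + s * t + t ^ 2 ≤ 10 := by nlinarith
  have hst : t ^ 4 < s ^ 2 * t ^ 2 := by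
    have : t ^ 2 < s ^ 2 := by gcongr
    nlinarith [pow_pos ht0 2]
  rcases le_total 0 a with ha0 | ha0
  · nlinarith
  · have hM0 : 0 ≤ √2 * (s + t) + s ^ 2 + s * t + t ^ 2 := by positivity
    nlinarith [mul_nonneg (neg_nonneg.2 ha0) hM0]

noncomputable def levyRoot (u y : ℝ) : ℝ := √(√(y ^ 2 + u * y + 1) - y + 1)

noncomputable def freeLevyDensity (u y : ℝ) : ℝ := 1 / (2 * √2 * π * y) * (√2 - levyRoot u y)

theorem antitone_levyRoot {u : ℝ} (hu : u ∈ Icc (-2) 2) : Antitone (levyRoot u) := by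
  intro x y hxy
  have hc : 0 ≤ 1 - u ^ 2 / 4 := by nlinarith [hu.1, hu.2]
  have key := antitone_sqrt_sq_add_sub hc (by linarith : x + u / 2 ≤ y + u / 2)
  have hsq : ∀ y : ℝ, y ^ 2 + u * y + 1 = (y + u / 2) ^ 2 + (1 - u ^ 2 / 4) := fun y => by ring
  simp only at key
  unfold levyRoot
  rw [hsq x, hsq y]
  exact Real.sqrt_le_sqrt (by linarith)

theorem continuous_levyRoot (u : ℝ) : Continuous (levyRoot u) := by
  unfold levyRoot
  fun_prop

theorem levyRoot_zero (u : ℝ) : levyRoot u 0 = √2 := by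
  norm_num [levyRoot]

theorem levyRoot_one_lt {u : ℝ} (hu : u < 2) : levyRoot u 1 < √2 := by
  refine Real.sqrt_lt_sqrt (by linarith [Real.sqrt_nonneg (1 ^ 2 + u * 1 + 1)]) ?_
  have : √(1 ^ 2 + u * 1 + 1) < 2 := (Real.sqrt_lt' (by norm_num)).2 (by linarith)
  linarith

theorem levyRoot_pos_of_lt_one {u y : ℝ} (hy : y < 1) : 0 < levyRoot u y :=
  Real.sqrt_pos.2 (by linarith [Real.sqrt_nonneg (y ^ 2 + u * y + 1)])

theorem levyRoot_pos {u y : ℝ} (hu : -2 < u) (hy : 0 < y) : 0 < levyRoot u y := by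
  rcases lt_or_ge y 1 with hy1 | hy1
  · exact levyRoot_pos_of_lt_one hy1
  refine Real.sqrt_pos.2 ?_
  have : y - 1 < √(y ^ 2 + u * y + 1) :=
    (Real.lt_sqrt (by linarith)).2 (by nlinarith [mul_pos (by linarith : 0 < u + 2) hy])
  linarith

theorem levyRoot_le_sqrt_two {u y : ℝ} (hu : u ≤ 2) (hy : 0 ≤ y) : levyRoot u y ≤ √2 := by
  refine Real.sqrt_le_sqrt ?_
  have : √(y ^ 2 + u * y + 1) ≤ y + 1 :=
    (Real.sqrt_le_left (by linarith)).2 (by nlinarith)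
  linarith

theorem image_levyRoot_subset {u : ℝ} (hu : u ∈ Ioc (-2) 2) :
    levyRoot u '' Ioi 0 ⊆ Ioc 0 √2 := by
  rintro _ ⟨y, hy, rfl⟩
  exact ⟨levyRoot_pos hu.1 hy, levyRoot_le_sqrt_two hu.2 (le_of_lt hy)⟩

theorem Ioo_subset_image_levyRoot (u : ℝ) : Ioo (levyRoot u 1) √2 ⊆ levyRoot u '' Ioo 0 1 := by
  simpa only [levyRoot_zero] using
    intermediate_value_Ioo' zero_le_one (continuous_levyRoot u).continuousOn

theorem freeLevyDensity_eq_levyProfile {u y : ℝ} (hu : -2 ≤ u) (hy : 0 < y)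
    (hT : 0 < levyRoot u y) : freeLevyDensity u y = levyProfile (u + 2) (levyRoot u y) := by
  set S := √(y ^ 2 + u * y + 1)
  have hS : S ^ 2 = y ^ 2 + u * y + 1 :=
    Real.sq_sqrt (by nlinarith [sq_nonneg (y - 1), mul_nonneg (by linarith : 0 ≤ u + 2) hy.le])
  set T := levyRoot u y with hT_def
  have hT2 : T ^ 2 = S - y + 1 := Real.sq_sqrt (Real.sqrt_pos.1 hT).le
  have hr : √2 ^ 2 = 2 := Real.sq_sqrt (by norm_num)
  have key : (√2 - T) * (T ^ 2 * (√2 + T)) = (2 * T ^ 2 - (u + 2)) * y := by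
    linear_combination T ^ 2 * hr + (-T ^ 2 - S - y + 1) * hT2 - hS
  unfold freeLevyDensity levyProfile
  rw [← hT_def]
  field_simp
  linear_combination key

theorem stmt_15 (u : ℝ) (hu : u ∈ Set.Icc (-2 : ℝ) 2) :
    AntitoneOn
      (fun y : ℝ =>
        (1 / (2 * Real.sqrt 2 * Real.pi * y)) *
          (Real.sqrt 2 - Real.sqrt (Real.sqrt (y^2 + u*y + 1) - y + 1)))
      (Set.Ioi 0)
    ↔ u ∈ Set.Icc (-6/5 : ℝ) 2 := by
  obtain ⟨hu₁, hu₂⟩ := hu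
  change AntitoneOn (freeLevyDensity u) (Ioi 0) ↔ _
  have hT {s : Set ℝ} : AntitoneOn (levyRoot u) s :=
    (antitone_levyRoot ⟨hu₁, hu₂⟩).antitoneOn s
  constructor
  · intro hg
    refine ⟨?_, hu₂⟩
    by_contra! hu
    have hmono : MonotoneOn (levyProfile (u + 2)) (levyRoot u '' Ioo 0 1) :=
      (antitoneOn_iff_monotoneOn_image hT fun y hy =>
        freeLevyDensity_eq_levyProfile hu₁ hy.1 (levyRoot_pos_of_lt_one hy.2)).1
        (hg.mono Ioo_subset_Ioi_self)
    exact not_monotoneOn_levyProfile (by linarith) (levyRoot_one_lt (by linarith))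
      (hmono.mono (Ioo_subset_image_levyRoot u))
  · rintro ⟨hu₀, -⟩
    have hu : u ∈ Ioc (-2) 2 := ⟨by linarith, hu₂⟩
    refine (antitoneOn_iff_monotoneOn_image (F := levyProfile (u + 2)) hT fun y hy =>
      freeLevyDensity_eq_levyProfile hu₁ hy (levyRoot_pos hu.1 hy)).2 ?_
    exact (monotoneOn_levyProfile (by linarith)).mono (image_levyRoot_subset hu)
end

section
/- Let a ∈ ℝ and b > 0, and consider the measure on ℝ with density t ↦ √(4b − (t−a)²)/(2πbt²) on [a − 2√b, a + 2√b] \ {0} (and 0 elsewhere, assuming 0 ∉ (a − 2√b, a + 2√b) or interpreting the density off 0). Then the function t ↦ |t|·√(4b − (t−a)²)/(2πbt²) is nondecreasing on (−∞,0) and nonincreasing on (0,∞) (within the interval [a − 2√b, a + 2√b]) if and only if a² ≤ 4b. -/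
/-!
For `t ≠ 0` the profile equals `√((4b - (t - a)²) / t²) / (2πb)`, and for `0 < s ≤ t`
`(4b - (s - a)²)/s² - (4b - (t - a)²)/t² = (t - s)((4b - a²)(s + t) + 2ast)/(s²t²)`,
whose last factor is nonnegative on the support as soon as `a ≤ 2√b`. If `a > 2√b` the support
lies in `(0, ∞)`, and the profile vanishes at its left endpoint while being positive inside, so it
is not antitone there. The reflection `t ↦ -t`, `a ↦ -a` transfers this to the negative
half-line, where the condition becomes `-2√b ≤ a`; together they say `|a| ≤ 2√b`.
-/

open Real Set

theorem monotoneOn_iff_antitoneOn_comp_neg {α β : Type*} [AddCommGroup α] [PartialOrder α]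
    [IsOrderedAddMonoid α] [Preorder β] {f : α → β} {s : Set α} :
    MonotoneOn f s ↔ AntitoneOn (fun x ↦ f (-x)) (-s) := by
  constructor
  · intro h x hx y hy hxy
    exact h hy hx (neg_le_neg hxy)
  · intro h x hx y hy hxy
    simpa using h (show -y ∈ -s by simpa) (show -x ∈ -s by simpa) (neg_le_neg hxy)

theorem div_sq_sub_div_sq (a c : ℝ) {s t : ℝ} (hs : s ≠ 0) (ht : t ≠ 0) :
    (c - (s - a) ^ 2) / s ^ 2 - (c - (t - a) ^ 2) / t ^ 2
      = (t - s) * ((c - a ^ 2) * (s + t) + 2 * a * s * t) / (s ^ 2 * t ^ 2) := by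
  field_simp
  ring

theorem sq_sub_sq_mul_add_add_nonneg {a x s t : ℝ} (hax : a ≤ x) (hs : 0 < s) (hst : s ≤ t)
    (ht : t ≤ a + x) : 0 ≤ (x ^ 2 - a ^ 2) * (s + t) + 2 * a * s * t := by
  rcases le_or_gt 0 a with ha | ha
  · have hxa : 0 ≤ x ^ 2 - a ^ 2 := by nlinarith
    have ht0 : 0 < t := hs.trans_le hst
    have hast : 0 ≤ 2 * a * s * t := by positivity
    exact add_nonneg (mul_nonneg hxa (by linarith)) hast
  · -- `t ≤ a + x` turns the negative term `2ast` into `2as(a + x)`, which factors out `x + a`.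
    have h₁ : 0 ≤ -a * s * (a + x - t) := by
      have := mul_pos (neg_pos.2 ha) hs
      exact mul_nonneg this.le (by linarith)
    have h₂ : 0 ≤ (x + a) * ((x - a) * t + (x + a) * s) := by
      have hxa : 0 ≤ x + a := by linarith
      exact mul_nonneg hxa (add_nonneg (mul_nonneg (by linarith) (by linarith))
        (mul_nonneg hxa hs.le))
    nlinarith

theorem four_mul_eq_two_mul_sqrt_sq {b : ℝ} (hb : 0 ≤ b) : 4 * b = (2 * √b) ^ 2 := by
  rw [mul_pow, sq_sqrt hb]
  norm_num

noncomputable def meixnerProfile (a b t : ℝ) : ℝ :=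
  |t| * √(4 * b - (t - a) ^ 2) / (2 * π * b * t ^ 2)

theorem meixnerProfile_neg (a b t : ℝ) : meixnerProfile a b (-t) = meixnerProfile (-a) b t := by
  simp only [meixnerProfile, abs_neg, neg_sq]
  ring_nf

theorem meixnerProfile_eq_sqrt_div (a b : ℝ) {t : ℝ} (ht : t ≠ 0) :
    meixnerProfile a b t = √((4 * b - (t - a) ^ 2) / t ^ 2) / (2 * π * b) := by
  rw [meixnerProfile, sqrt_div' _ (sq_nonneg t), sqrt_sq_eq_abs, ← sq_abs t]
  have : |t| ≠ 0 := abs_ne_zero.2 ht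
  field_simp

theorem meixnerProfile_pos {a b t : ℝ} (hb : 0 < b) (ht : t ≠ 0) (hta : (t - a) ^ 2 < 4 * b) :
    0 < meixnerProfile a b t := by
  have := sqrt_pos.2 (sub_pos.2 hta)
  unfold meixnerProfile
  positivity

theorem meixnerProfile_sub_two_mul_sqrt (a : ℝ) {b : ℝ} (hb : 0 ≤ b) :
    meixnerProfile a b (a - 2 * √b) = 0 := by
  have : 4 * b - (a - 2 * √b - a) ^ 2 = 0 := by
    rw [sub_sub_cancel_left, neg_sq, ← four_mul_eq_two_mul_sqrt_sq hb, sub_self]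
  rw [meixnerProfile, this, sqrt_zero, mul_zero, zero_div]

theorem meixnerProfile_antitoneOn {a b : ℝ} (hb : 0 < b) (ha : a ≤ 2 * √b) :
    AntitoneOn (meixnerProfile a b) (Icc (a - 2 * √b) (a + 2 * √b) ∩ Ioi 0) := by
  rintro s ⟨-, hs⟩ t ⟨⟨-, hta⟩, ht⟩ hst
  rw [mem_Ioi] at hs ht
  rw [meixnerProfile_eq_sqrt_div a b hs.ne', meixnerProfile_eq_sqrt_div a b ht.ne']
  refine div_le_div_of_nonneg_right (sqrt_le_sqrt ?_) (by positivity)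
  rw [← sub_nonneg, div_sq_sub_div_sq a _ hs.ne' ht.ne', four_mul_eq_two_mul_sqrt_sq hb.le]
  have := sq_sub_sq_mul_add_add_nonneg ha hs hst hta
  have : 0 ≤ t - s := sub_nonneg.2 hst
  positivity

theorem antitoneOn_meixnerProfile_iff {a b : ℝ} (hb : 0 < b) :
    AntitoneOn (meixnerProfile a b) (Icc (a - 2 * √b) (a + 2 * √b) ∩ Ioi 0) ↔ a ≤ 2 * √b := by
  refine ⟨fun h ↦ ?_, meixnerProfile_antitoneOn hb⟩
  by_contra! ha
  have hr := sqrt_pos.2 hb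
  have hle := h ⟨⟨le_rfl, by linarith⟩, show 0 < a - 2 * √b by linarith⟩
    ⟨⟨by linarith, by linarith⟩, show 0 < a - √b by linarith⟩ (by linarith)
  rw [meixnerProfile_sub_two_mul_sqrt a hb.le] at hle
  refine hle.not_gt (meixnerProfile_pos hb (by linarith) ?_)
  rw [sub_sub_cancel_left, neg_sq, sq_sqrt hb.le]
  linarith

theorem monotoneOn_meixnerProfile_iff {a b : ℝ} (hb : 0 < b) :
    MonotoneOn (meixnerProfile a b) (Icc (a - 2 * √b) (a + 2 * √b) ∩ Iio 0) ↔ -(2 * √b) ≤ a := by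
  rw [monotoneOn_iff_antitoneOn_comp_neg, funext (meixnerProfile_neg a b), inter_neg, neg_Icc,
    neg_Iio, neg_zero, neg_sub', sub_neg_eq_add, neg_add', neg_le]
  exact antitoneOn_meixnerProfile_iff hb

theorem stmt_17 (a b : ℝ) (hb : 0 < b) :
    (MonotoneOn
        (fun t : ℝ => |t| * Real.sqrt (4*b - (t - a)^2) / (2 * Real.pi * b * t^2))
        (Set.Icc (a - 2*Real.sqrt b) (a + 2*Real.sqrt b) ∩ Set.Iio 0) ∧
      AntitoneOn
        (fun t : ℝ => |t| * Real.sqrt (4*b - (t - a)^2) / (2 * Real.pi * b * t^2))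
        (Set.Icc (a - 2*Real.sqrt b) (a + 2*Real.sqrt b) ∩ Set.Ioi 0))
    ↔ a^2 ≤ 4*b := by
  change MonotoneOn (meixnerProfile a b) _ ∧ AntitoneOn (meixnerProfile a b) _ ↔ _
  rw [monotoneOn_meixnerProfile_iff hb, antitoneOn_meixnerProfile_iff hb, ← abs_le,
    four_mul_eq_two_mul_sqrt_sq hb.le, sq_le_sq, abs_of_nonneg (by positivity : (0 : ℝ) ≤ 2 * √b)]
end

section
/- The function x ↦ 2√2 − √(√(x⁴ + 16x²) − x²) is strictly decreasing on (0,∞). -/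
open Real Set

/-- Rationalising `x²(√(1 + c/x²) - 1)`; the right-hand side is visibly increasing in `x > 0`. -/
lemma sqrt_pow_four_add_mul_sq_sub_sq {c x : ℝ} (hc : 0 ≤ c) (hx : x ≠ 0) :
    √(x ^ 4 + c * x ^ 2) - x ^ 2 = c / (√(1 + c / x ^ 2) + 1) := by
  set s := √(1 + c / x ^ 2)
  have hx2 : 0 < x ^ 2 := by positivity
  have hs_sq : s ^ 2 = 1 + c / x ^ 2 := sq_sqrt (by positivity)
  have hsqrt : √(x ^ 4 + c * x ^ 2) = x ^ 2 * s := by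
    rw [show x ^ 4 + c * x ^ 2 = (x ^ 2) ^ 2 * (1 + c / x ^ 2) by field_simp,
      sqrt_mul (by positivity), sqrt_sq hx2.le]
  have hs1 : 0 < s + 1 := by positivity
  rw [hsqrt, eq_div_iff hs1.ne']
  calc (x ^ 2 * s - x ^ 2) * (s + 1) = x ^ 2 * (s ^ 2 - 1) := by ring
    _ = c := by rw [hs_sq]; field_simp; ring

lemma strictMonoOn_sqrt_pow_four_add_mul_sq_sub_sq {c : ℝ} (hc : 0 < c) :
    StrictMonoOn (fun x : ℝ => √(x ^ 4 + c * x ^ 2) - x ^ 2) (Ioi 0) := by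
  intro a (ha : 0 < a) b _ hab
  simp only
  rw [sqrt_pow_four_add_mul_sq_sub_sq hc.le ha.ne',
    sqrt_pow_four_add_mul_sq_sub_sq hc.le (ha.trans hab).ne']
  apply div_lt_div_of_pos_left hc (by positivity)
  gcongr

theorem stmt_18 :
    StrictAntiOn
      (fun x : ℝ => 2 * Real.sqrt 2 - Real.sqrt (Real.sqrt (x^4 + 16*x^2) - x^2))
      (Set.Ioi 0) := by
  intro a ha b hb hab
  have hnonneg : 0 ≤ √(a ^ 4 + 16 * a ^ 2) - a ^ 2 := by
    rw [sqrt_pow_four_add_mul_sq_sub_sq (by norm_num) (ne_of_gt ha)]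
    positivity
  simp only [sub_lt_sub_iff_left]
  exact sqrt_lt_sqrt hnonneg (strictMonoOn_sqrt_pow_four_add_mul_sq_sub_sq (by norm_num) ha hb hab)
end
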